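/- arXiv:2603.04594 — 7 statements merged into one kernel-verified Lean document; each statement's English description precedes it below -/
import Mathlib

section
/- Let α ∈ (0,1) and n ∈ ℕ. Then for every x > 0, the function y ↦ (1/Γ(1−α))·∫₀^y tⁿ·(y−t)^(−α) dt has derivative at x equal to (Γ(n+1)/Γ(n+1−α))·x^(n−α). (This is the Riemann–Liouville fractional derivative of order α of the monomial x ↦ xⁿ.) -/
/-!
The Riemann–Liouville integral of a monomial is a Beta integral: after scaling `t = y s`,
`∫₀ʸ tⁿ (y - t)^(-α) dt = B(n + 1, 1 - α) y^(n+1-α)`, and `B = Γ(n+1) Γ(1-α) / Γ(n+2-α)`.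
Near `x > 0` the function is therefore `Γ(n+1)/Γ(n+2-α) · y^(n+1-α)`, whose derivative is
`Γ(n+1)/Γ(n+1-α) · x^(n-α)` by `Γ(n+2-α) = (n+1-α) Γ(n+1-α)`.
-/

open Real Topology

theorem integral_rpow_mul_sub_rpow {s u y : ℝ} (hs : 0 < s) (hu : 0 < u) (hy : 0 < y) :
    ∫ t in (0 : ℝ)..y, t ^ (s - 1) * (y - t) ^ (u - 1) =
      Gamma s * Gamma u / Gamma (s + u) * y ^ (s + u - 1) := by
  apply Complex.ofReal_injective
  have hcpow : ∀ t ∈ Set.uIcc 0 y, ((t ^ (s - 1) * (y - t) ^ (u - 1) : ℝ) : ℂ) =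
      (t : ℂ) ^ ((s : ℂ) - 1) * ((y : ℂ) - t) ^ ((u : ℂ) - 1) := by
    intro t ht
    rw [Set.uIcc_of_le hy.le] at ht
    push_cast [Complex.ofReal_cpow ht.1, Complex.ofReal_cpow (sub_nonneg.2 ht.2)]
    rfl
  rw [← intervalIntegral.integral_ofReal, intervalIntegral.integral_congr hcpow,
    Complex.betaIntegral_scaled _ _ hy,
    Complex.betaIntegral_eq_Gamma_mul_div _ _ (by simpa) (by simpa)]
  push_cast [Complex.ofReal_cpow hy.le, ← Complex.Gamma_ofReal]
  ring

theorem integral_pow_mul_sub_rpow_neg {α : ℝ} (hα : α < 1) (n : ℕ) {y : ℝ} (hy : 0 < y) :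
    ∫ t in (0 : ℝ)..y, t ^ n * (y - t) ^ (-α) =
      Gamma (n + 1) * Gamma (1 - α) / Gamma (n + 2 - α) * y ^ ((n : ℝ) + 1 - α) := by
  have h := integral_rpow_mul_sub_rpow (s := n + 1) (u := 1 - α) (by positivity) (by linarith) hy
  simp only [add_sub_cancel_right, sub_sub_cancel_left, Real.rpow_natCast] at h
  rw [h]
  ring_nf

/-- Riemann--Liouville fractional derivative of order `α ∈ (0,1)` of the monomial `x ↦ xⁿ`:
the function `y ↦ (1/Γ(1−α)) ∫₀ʸ tⁿ (y−t)^(−α) dt` has derivative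
`(Γ(n+1)/Γ(n+1−α)) x^(n−α)` at every `x > 0`. -/
theorem rl_derivative_monomial (α : ℝ) (hα : α ∈ Set.Ioo (0 : ℝ) 1) (n : ℕ)
    (x : ℝ) (hx : 0 < x) :
    HasDerivAt
      (fun y : ℝ => (1 / Real.Gamma (1 - α)) * ∫ t in (0 : ℝ)..y, t ^ n * (y - t) ^ (-α))
      ((Real.Gamma ((n : ℝ) + 1) / Real.Gamma ((n : ℝ) + 1 - α)) * x ^ ((n : ℝ) - α)) x := by
  have hpos : 0 < (n : ℝ) + 1 - α := by linarith [hα.2, n.cast_nonneg (α := ℝ)]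
  have hclosed : (fun y : ℝ => (1 / Gamma (1 - α)) * ∫ t in (0 : ℝ)..y, t ^ n * (y - t) ^ (-α))
      =ᶠ[𝓝 x] fun y => Gamma (n + 1) / Gamma (n + 2 - α) * y ^ ((n : ℝ) + 1 - α) := by
    filter_upwards [Ioi_mem_nhds hx] with y hy
    rw [integral_pow_mul_sub_rpow_neg hα.2 n hy]
    field_simp [(Gamma_pos_of_pos (sub_pos.2 hα.2)).ne']
  have hGamma : Gamma ((n : ℝ) + 2 - α) = ((n : ℝ) + 1 - α) * Gamma ((n : ℝ) + 1 - α) := by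
    rw [← Gamma_add_one hpos.ne']; ring_nf
  refine ((hasDerivAt_rpow_const (Or.inl hx.ne')).const_mul _).congr_of_eventuallyEq hclosed
    |>.congr_deriv ?_
  rw [hGamma, show (n : ℝ) + 1 - α - 1 = n - α by ring]
  field_simp [(Gamma_pos_of_pos hpos).ne']
end

section
/- Let a : ℕ → ℝ satisfy a(n) ≥ 0 for all n and ∑_{n=0}^∞ n!·a(n) < ∞ (summable). Define f : ℝ → ℝ by f(λ) = ∑_{n=0}^∞ n!·λ^(2n)·a(n). Then the set { f′(λ) : λ ∈ (0,1) } of values of the derivative of f on (0,1) is bounded above if and only if ∑_{n=0}^∞ (1+n)·n!·a(n) < ∞ (summable). (Sequence form of Theorem 2.8 for m = 1: F ∈ D^{1,2} iff sup_{0<λ<1} ∂_λ ∫ |SF(λu)|² dν(u) < ∞.) -/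
/-!
With `c n = n! a n`, `f` is the power series `∑ c n λ^(2n)`, so on `(0,1)` its derivative is the
series `∑ 2n c n λ^(2n-1)` with nonnegative coefficients. Such a series is bounded on `(0,1)` iff
its coefficients are summable: one direction is `λ^k ≤ 1`, the other lets `λ → 1⁻` in each
partial sum. Since `∑ c n < ∞`, summability of `2n c n` is that of `(1+n) c n`.
-/

open Filter Set Topology

section PowerSeries

variable {c : ℕ → ℝ} (e : ℕ → ℕ)

theorem summable_mul_pow_of_abs_le_one (hc : Summable c) {x : ℝ} (hx : |x| ≤ 1) :
    Summable fun n => c n * x ^ e n := by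
  refine hc.abs.of_norm_bounded fun n => ?_
  rw [Real.norm_eq_abs, abs_mul, abs_pow]
  exact mul_le_of_le_one_right (abs_nonneg _) (pow_le_one₀ (abs_nonneg x) hx)

theorem exists_abs_natCast_mul_pow_sub_one_le {r : ℝ} (hr0 : 0 ≤ r) (hr : r < 1) :
    ∃ C, ∀ (k : ℕ) (y : ℝ), |y| ≤ r → |(k : ℝ) * y ^ (k - 1)| ≤ C := by
  have hlim : Tendsto (fun m : ℕ => ((m : ℝ) + 1) * r ^ m) atTop (𝓝 0) := by
    simpa [add_mul] using (tendsto_self_mul_const_pow_of_lt_one hr0 hr).add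
      (tendsto_pow_atTop_nhds_zero_of_lt_one hr0 hr)
  obtain ⟨C, hC⟩ := hlim.bddAbove_range
  refine ⟨C, fun k y hy => ?_⟩
  have hC0 : 1 ≤ C := by simpa using hC ⟨0, rfl⟩
  cases k with
  | zero => simpa using zero_le_one.trans hC0
  | succ m =>
    calc |((m + 1 : ℕ) : ℝ) * y ^ (m + 1 - 1)| = ((m : ℝ) + 1) * |y| ^ m := by
          rw [abs_mul, abs_pow, Nat.add_sub_cancel, Nat.abs_cast]; push_cast; ring
      _ ≤ ((m : ℝ) + 1) * r ^ m := by gcongr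
      _ ≤ C := hC ⟨m, rfl⟩

theorem summable_natCast_mul_mul_pow_sub_one (hc : Summable c) {x : ℝ} (hx : |x| < 1) :
    Summable fun n => (e n : ℝ) * c n * x ^ (e n - 1) := by
  obtain ⟨C, hC⟩ := exists_abs_natCast_mul_pow_sub_one_le (abs_nonneg x) hx
  refine (hc.abs.mul_left C).of_norm_bounded fun n => ?_
  rw [Real.norm_eq_abs, mul_right_comm, abs_mul]
  exact mul_le_mul_of_nonneg_right (hC (e n) x le_rfl) (abs_nonneg _)

theorem hasDerivAt_tsum_mul_pow (hc : Summable c) {x : ℝ} (hx : |x| < 1) :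
    HasDerivAt (fun y => ∑' n, c n * y ^ e n) (∑' n, (e n : ℝ) * c n * x ^ (e n - 1)) x := by
  obtain ⟨r, hxr, hr⟩ := exists_between hx
  have hr0 : 0 < r := (abs_nonneg x).trans_lt hxr
  obtain ⟨C, hC⟩ := exists_abs_natCast_mul_pow_sub_one_le hr0.le hr
  refine hasDerivAt_tsum_of_isPreconnected (g := fun n y => c n * y ^ e n)
    (g' := fun n y => (e n : ℝ) * c n * y ^ (e n - 1)) (t := Ioo (-r) r) (y₀ := 0)
    (hc.abs.mul_left C) isOpen_Ioo isPreconnected_Ioo (fun n y _ => ?_) (fun n y hy => ?_)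
    ⟨neg_lt_zero.mpr hr0, hr0⟩
    (summable_mul_pow_of_abs_le_one e hc (by simp)) (abs_lt.mp hxr)
  · exact ((hasDerivAt_pow (e n) y).const_mul (c n)).congr_deriv (by ring)
  · rw [Real.norm_eq_abs, mul_right_comm, abs_mul]
    exact mul_le_mul_of_nonneg_right (hC (e n) y (abs_le.mpr ⟨hy.1.le, hy.2.le⟩)) (abs_nonneg _)

theorem tsum_mul_pow_le_tsum (hc0 : ∀ n, 0 ≤ c n) (hc : Summable c) {x : ℝ} (hx0 : 0 ≤ x)
    (hx1 : x ≤ 1) : ∑' n, c n * x ^ e n ≤ ∑' n, c n :=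
  (summable_mul_pow_of_abs_le_one e hc (abs_le.mpr ⟨by linarith, hx1⟩)).tsum_le_tsum
    (fun n => mul_le_of_le_one_right (hc0 n) (pow_le_one₀ hx0 hx1)) hc

theorem summable_of_forall_tsum_mul_pow_le (hc0 : ∀ n, 0 ≤ c n)
    (hs : ∀ x ∈ Ioo (0 : ℝ) 1, Summable fun n => c n * x ^ e n) {M : ℝ}
    (hM : ∀ x ∈ Ioo (0 : ℝ) 1, ∑' n, c n * x ^ e n ≤ M) : Summable c := by
  refine summable_of_sum_range_le (c := M) hc0 fun N => ?_
  have hlim : Tendsto (fun x : ℝ => ∑ n ∈ Finset.range N, c n * x ^ e n) (𝓝[<] 1)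
      (𝓝 (∑ n ∈ Finset.range N, c n)) := by
    have hcont : Continuous fun x : ℝ => ∑ n ∈ Finset.range N, c n * x ^ e n := by fun_prop
    simpa using (hcont.tendsto 1).mono_left nhdsWithin_le_nhds
  refine le_of_tendsto hlim ?_
  filter_upwards [Ioo_mem_nhdsLT zero_lt_one] with x hx
  exact ((hs x hx).sum_le_tsum _ fun n _ => mul_nonneg (hc0 n) (pow_nonneg hx.1.le _)).trans
    (hM x hx)

theorem bddAbove_tsum_mul_pow_iff (hc0 : ∀ n, 0 ≤ c n)
    (hs : ∀ x ∈ Ioo (0 : ℝ) 1, Summable fun n => c n * x ^ e n) :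
    BddAbove ((fun x => ∑' n, c n * x ^ e n) '' Ioo 0 1) ↔ Summable c := by
  refine ⟨fun ⟨M, hM⟩ => summable_of_forall_tsum_mul_pow_le e hc0 hs
    fun x hx => hM (mem_image_of_mem _ hx), fun hc => ⟨∑' n, c n, ?_⟩⟩
  rintro _ ⟨x, hx, rfl⟩
  exact tsum_mul_pow_le_tsum e hc0 hc hx.1.le hx.2.le

end PowerSeries

theorem summable_one_add_mul_iff {c : ℕ → ℝ} (hc : Summable c) :
    Summable (fun n : ℕ => (1 + (n : ℝ)) * c n) ↔ Summable fun n : ℕ => (n : ℝ) * c n := by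
  simp_rw [add_mul, one_mul]
  exact ⟨fun h => (h.sub hc).congr fun n => by ring, hc.add⟩

/-- Sequence form of Theorem 2.8 for `m = 1`: for `f(λ) = ∑ n! λ^(2n) a n` with `a ≥ 0` and
`∑ n! a n < ∞`, the derivative of `f` is bounded above on `(0,1)` iff
`∑ (1+n) n! a n < ∞`. -/
theorem malliavin_D12_characterization (a : ℕ → ℝ) (ha : ∀ n, 0 ≤ a n)
    (hsum : Summable fun n => (n.factorial : ℝ) * a n)
    (f : ℝ → ℝ) (hf : ∀ x : ℝ, f x = ∑' n : ℕ, (n.factorial : ℝ) * x ^ (2 * n) * a n) :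
    BddAbove (deriv f '' Set.Ioo (0 : ℝ) 1) ↔
      Summable fun n : ℕ => (1 + (n : ℝ)) * (n.factorial : ℝ) * a n := by
  have hf' : f = fun x => ∑' n, ((n.factorial : ℝ) * a n) * x ^ (2 * n) :=
    funext fun x => (hf x).trans (tsum_congr fun n => by ring)
  have hderiv : EqOn (deriv f) (fun x => ∑' n, (((2 * n : ℕ) : ℝ) * (n.factorial * a n)) *
      x ^ (2 * n - 1)) (Ioo 0 1) := fun x hx =>
    hf' ▸ (hasDerivAt_tsum_mul_pow (2 * ·) hsum ((abs_of_pos hx.1).trans_lt hx.2)).deriv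
  rw [image_congr hderiv, bddAbove_tsum_mul_pow_iff (2 * · - 1)
    (fun n => mul_nonneg (Nat.cast_nonneg _) (mul_nonneg (Nat.cast_nonneg _) (ha n)))
    (fun x hx => summable_natCast_mul_mul_pow_sub_one (2 * ·) hsum
      ((abs_of_pos hx.1).trans_lt hx.2))]
  have htwo (n : ℕ) : ((2 * n : ℕ) : ℝ) * (n.factorial * a n) = 2 * (n * (n.factorial * a n)) := by
    push_cast; ring
  simp_rw [htwo, summable_mul_left_iff (two_ne_zero (α := ℝ)), mul_assoc,
    summable_one_add_mul_iff hsum]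
end

section
/- Let a : ℕ → ℝ satisfy a(n) ≥ 0 for all n and ∑_{n=0}^∞ n!·a(n) < ∞ (summable). Define f : ℝ → ℝ by f(λ) = ∑_{n=0}^∞ n!·λ^(2n)·a(n). Then for every m ∈ ℕ, the set { (iteratedDeriv m f)(λ) : λ ∈ (0,1) } of values of the m-th derivative of f on (0,1) is bounded above if and only if ∑_{n=0}^∞ (1+n^m)·n!·a(n) < ∞ (summable). (Sequence form of Theorem 2.8: F ∈ D^{m,2} iff sup_{0<λ<1} ∂^m_λ ∫ |SF(λu)|² dν(u) < ∞.) -/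
/-! Put `c (2n) = n! a n` and `c k = 0` for odd `k`, so that `f x = ∑ c k x^k`. On `(0,1)` the
`m`-th derivative of `f` is the termwise derivative `∑ k.descFactorial m * c k * x^(k-m)`, a
series with nonnegative coefficients; such a series is bounded on `(0,1)` exactly when its
coefficients are summable (let `x → 1⁻` in the partial sums), and `k.descFactorial m` is
comparable to `k^m`. -/

open Filter Set Topology Function

section NonnegPowerSeries

variable {c : ℕ → ℝ}

lemma summable_mul_iteratedDeriv_pow (hc : ∀ n, 0 ≤ c n)
    (hs : ∀ r ∈ Ioo (0 : ℝ) 1, Summable fun n => c n * r ^ n) (m : ℕ) {r : ℝ}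
    (hr : r ∈ Ioo (0 : ℝ) 1) :
    Summable fun n => c n * iteratedDeriv m (· ^ n) r := by
  obtain ⟨ρ, hrρ, hρ1⟩ := exists_between hr.2
  have hρ : 0 < ρ := hr.1.trans hrρ
  have hq : ‖r / ρ‖ < 1 := by
    rw [Real.norm_of_nonneg (div_nonneg hr.1.le hρ.le)]
    exact (div_lt_one hρ).2 hrρ
  set M := ∑' k, c k * ρ ^ k
  have hM : ∀ n, c n * ρ ^ n ≤ M := fun n =>
    (hs ρ ⟨hρ, hρ1⟩).le_tsum n fun k _ => mul_nonneg (hc k) (pow_nonneg hρ.le k)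
  simp only [iteratedDeriv_pow]
  rw [← summable_nat_add_iff m]
  refine .of_nonneg_of_le (fun n => mul_nonneg (hc _) (by have := hr.1; positivity)) (fun n => ?_)
    ((summable_descFactorial_mul_geometric_of_norm_lt_one m hq).mul_left (M / ρ ^ m))
  calc c (n + m) * ((n + m).descFactorial m * r ^ (n + m - m))
      = (c (n + m) * ρ ^ (n + m)) * ((n + m).descFactorial m * (r / ρ) ^ n) / ρ ^ m := by
        rw [Nat.add_sub_cancel, div_pow, pow_add]
        field_simp
    _ ≤ M * ((n + m).descFactorial m * (r / ρ) ^ n) / ρ ^ m := by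
        have := hr.1
        gcongr
        exact hM _
    _ = M / ρ ^ m * ((n + m).descFactorial m * (r / ρ) ^ n) := by ring

lemma hasDerivAt_tsum_mul_iteratedDeriv_pow (hc : ∀ n, 0 ≤ c n)
    (hs : ∀ r ∈ Ioo (0 : ℝ) 1, Summable fun n => c n * r ^ n) (m : ℕ) {x : ℝ}
    (hx : x ∈ Ioo (0 : ℝ) 1) :
    HasDerivAt (fun y => ∑' n, c n * iteratedDeriv m (· ^ n) y)
      (∑' n, c n * iteratedDeriv (m + 1) (· ^ n) x) x := by
  obtain ⟨ρ, hxρ, hρ1⟩ := exists_between hx.2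
  have hρ : 0 < ρ := hx.1.trans hxρ
  refine hasDerivAt_tsum_of_isPreconnected (g := fun n y => c n * iteratedDeriv m (· ^ n) y)
    (g' := fun n y => c n * iteratedDeriv (m + 1) (· ^ n) y)
    (summable_mul_iteratedDeriv_pow hc hs (m + 1) ⟨hρ, hρ1⟩) isOpen_Ioo isPreconnected_Ioo
    (fun n y _ => ?_) (fun n y hy => ?_) ⟨hx.1, hxρ⟩
    (summable_mul_iteratedDeriv_pow hc hs m hx) ⟨hx.1, hxρ⟩
  · have hd : Differentiable ℝ (iteratedDeriv m (· ^ n : ℝ → ℝ)) :=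
      ContDiff.differentiable_iteratedDeriv' m (by fun_prop)
    rw [iteratedDeriv_succ]
    exact (hd y).hasDerivAt.const_mul (c n)
  · have := hc n
    have := hy.1.le
    rw [iteratedDeriv_pow, iteratedDeriv_pow, Real.norm_of_nonneg (by positivity)]
    gcongr
    exact hy.2.le

lemma iteratedDeriv_tsum_mul_pow (hc : ∀ n, 0 ≤ c n)
    (hs : ∀ r ∈ Ioo (0 : ℝ) 1, Summable fun n => c n * r ^ n) (m : ℕ) {x : ℝ}
    (hx : x ∈ Ioo (0 : ℝ) 1) :
    iteratedDeriv m (fun y => ∑' n, c n * y ^ n) x =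
      ∑' n, c n * iteratedDeriv m (· ^ n) x := by
  induction m generalizing x with
  | zero => simp
  | succ m ih =>
    have hnear : iteratedDeriv m (fun y => ∑' n, c n * y ^ n)
        =ᶠ[𝓝 x] fun y => ∑' n, c n * iteratedDeriv m (· ^ n) y :=
      eventually_of_mem (isOpen_Ioo.mem_nhds hx) fun y hy => ih hy
    rw [iteratedDeriv_succ, hnear.deriv_eq]
    exact (hasDerivAt_tsum_mul_iteratedDeriv_pow hc hs m hx).deriv

end NonnegPowerSeries

lemma bddAbove_tsum_mul_pow_image_iff {d : ℕ → ℝ} (hd : ∀ n, 0 ≤ d n) (e : ℕ → ℕ)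
    (hs : ∀ x ∈ Ioo (0 : ℝ) 1, Summable fun n => d n * x ^ e n) :
    BddAbove ((fun x => ∑' n, d n * x ^ e n) '' Ioo 0 1) ↔ Summable d := by
  constructor
  · rintro ⟨B, hB⟩
    refine summable_of_sum_range_le (c := B) hd fun N => ?_
    have hlim : Tendsto (fun x : ℝ => ∑ n ∈ Finset.range N, d n * x ^ e n) (𝓝[<] 1)
        (𝓝 (∑ n ∈ Finset.range N, d n)) := by
      refine (Continuous.tendsto' ?_ 1 _ (by simp)).mono_left nhdsWithin_le_nhds
      fun_prop
    refine le_of_tendsto hlim ?_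
    filter_upwards [Ioo_mem_nhdsLT one_pos] with x hx
    exact ((hs x hx).sum_le_tsum _ fun n _ => mul_nonneg (hd n) (pow_nonneg hx.1.le _)).trans
      (hB ⟨x, hx, rfl⟩)
  · refine fun hsum => ⟨∑' n, d n, ?_⟩
    rintro _ ⟨x, hx, rfl⟩
    exact (hs x hx).tsum_le_tsum
      (fun n => mul_le_of_le_one_right (hd n) (pow_le_one₀ hx.1.le hx.2.le)) hsum

lemma summable_descFactorial_mul_iff_summable_pow_mul {c : ℕ → ℝ} (hc : ∀ n, 0 ≤ c n)
    (m : ℕ) :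
    Summable (fun n => (n.descFactorial m : ℝ) * c n) ↔
      Summable fun n : ℕ => (n : ℝ) ^ m * c n := by
  constructor
  · intro h
    refine .of_norm_bounded_eventually_nat (h.mul_left (2 ^ m)) ?_
    filter_upwards [eventually_ge_atTop (2 * m)] with n hn
    have hpow : n ^ m ≤ 2 ^ m * n.descFactorial m :=
      calc n ^ m ≤ (2 * (n + 1 - m)) ^ m := Nat.pow_le_pow_left (by omega) m
        _ = 2 ^ m * (n + 1 - m) ^ m := Nat.mul_pow _ _ _
        _ ≤ 2 ^ m * n.descFactorial m := Nat.mul_le_mul_left _ (Nat.pow_sub_le_descFactorial n m)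
    rw [Real.norm_of_nonneg (by have := hc n; positivity), ← mul_assoc]
    gcongr
    · exact hc n
    · exact_mod_cast hpow
  · refine fun h => .of_nonneg_of_le (fun n => by have := hc n; positivity) (fun n => ?_) h
    gcongr
    · exact hc n
    · exact_mod_cast Nat.descFactorial_le_pow n m

theorem bddAbove_iteratedDeriv_tsum_mul_pow_iff {c : ℕ → ℝ} (hc : ∀ n, 0 ≤ c n)
    (hs : ∀ r ∈ Ioo (0 : ℝ) 1, Summable fun n => c n * r ^ n) (m : ℕ) :
    BddAbove (iteratedDeriv m (fun y => ∑' n, c n * y ^ n) '' Ioo 0 1) ↔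
      Summable fun n : ℕ => (n : ℝ) ^ m * c n := by
  have hform : ∀ x ∈ Ioo (0 : ℝ) 1, iteratedDeriv m (fun y => ∑' n, c n * y ^ n) x =
      ∑' n, (n.descFactorial m * c n) * x ^ (n - m) := fun x hx => by
    rw [iteratedDeriv_tsum_mul_pow hc hs m hx]
    exact tsum_congr fun n => by rw [iteratedDeriv_pow]; ring
  rw [image_congr hform, bddAbove_tsum_mul_pow_image_iff (fun n => by have := hc n; positivity),
    summable_descFactorial_mul_iff_summable_pow_mul hc]
  intro x hx
  exact (summable_mul_iteratedDeriv_pow hc hs m hx).congr fun n => by rw [iteratedDeriv_pow]; ring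

lemma extend_zero_mul {ι κ R : Type*} [MulZeroClass R] {g : ι → κ} (hg : Injective g)
    (b : ι → R) (h : κ → R) :
    (fun k => extend g b 0 k * h k) = extend g (fun i => b i * h (g i)) 0 := by
  funext k
  by_cases hk : ∃ i, g i = k
  · obtain ⟨i, rfl⟩ := hk
    simp only [hg.extend_apply]
  · simp only [extend_apply' _ _ _ hk, Pi.zero_apply, zero_mul]

lemma extend_zero_nonneg {ι κ R : Type*} [Zero R] [Preorder R] {g : ι → κ} {b : ι → R}
    (hb : ∀ i, 0 ≤ b i) (k : κ) :
    0 ≤ extend g b 0 k := by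
  classical
  rw [extend_def]
  split_ifs
  exacts [hb _, le_rfl]

/-- Sequence form of Theorem 2.8: for `f(λ) = ∑ n! λ^(2n) a n` with `a ≥ 0` and
`∑ n! a n < ∞`, and any `m ∈ ℕ`, the `m`-th derivative of `f` is bounded above on `(0,1)` iff
`∑ (1+n^m) n! a n < ∞`. -/
theorem malliavin_Dm2_characterization (a : ℕ → ℝ) (ha : ∀ n, 0 ≤ a n)
    (hsum : Summable fun n => (n.factorial : ℝ) * a n)
    (f : ℝ → ℝ) (hf : ∀ x : ℝ, f x = ∑' n : ℕ, (n.factorial : ℝ) * x ^ (2 * n) * a n)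
    (m : ℕ) :
    BddAbove (iteratedDeriv m f '' Set.Ioo (0 : ℝ) 1) ↔
      Summable fun n : ℕ => (1 + (n : ℝ) ^ m) * (n.factorial : ℝ) * a n := by
  set b : ℕ → ℝ := fun n => n.factorial * a n
  have hb : ∀ n, 0 ≤ b n := fun n => mul_nonneg (Nat.cast_nonneg _) (ha n)
  have h2 : Injective (2 * · : ℕ → ℕ) := mul_right_injective₀ two_ne_zero
  set c : ℕ → ℝ := extend (2 * ·) b 0
  have hc : ∀ k, 0 ≤ c k := extend_zero_nonneg hb
  have hfc : f = fun x => ∑' k, c k * x ^ k := funext fun x => by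
    rw [hf, extend_zero_mul h2, tsum_extend_zero h2]
    exact tsum_congr fun n => by ring
  have hs : ∀ r ∈ Ioo (0 : ℝ) 1, Summable fun k => c k * r ^ k := fun r hr => by
    rw [extend_zero_mul h2, summable_extend_zero h2]
    exact .of_nonneg_of_le (fun n => mul_nonneg (hb n) (pow_nonneg hr.1.le _))
      (fun n => mul_le_of_le_one_right (hb n) (pow_le_one₀ hr.1.le hr.2.le)) hsum
  have hpow : Summable (fun k : ℕ => (k : ℝ) ^ m * c k) ↔
      Summable fun n : ℕ => (n : ℝ) ^ m * b n := by
    simp_rw [mul_comm _ (c _)]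
    rw [extend_zero_mul h2, summable_extend_zero h2]
    simp_rw [Nat.cast_mul, mul_pow, mul_comm (b _), mul_assoc]
    exact summable_mul_left_iff (by positivity)
  rw [hfc, bddAbove_iteratedDeriv_tsum_mul_pow_iff hc hs, hpow]
  exact (summable_iff_of_summable_sub (hsum.congr fun n => by ring)).symm
end

section
/- Let α ∈ (0,1) and let a : ℕ → [0,∞] (extended nonnegative reals). Define f : (0,1) → [0,∞] by f(λ) = ∑_{n=0}^∞ n!·λ^(2n)·a(n), a tsum in [0,∞]. Then the Lebesgue lower integral (1/Γ(α))·∫₀¹ (1−λ)^(α−1)·f(λ) dλ equals ∑_{n=0}^∞ (Γ(2n+1)/Γ(2n+1+α))·n!·a(n), and this quantity is finite if and only if ∑_{n=0}^∞ (n!/(1+n^α))·a(n) < ∞. (Sequence form of Theorem 2.11 for m = 0: Φ ∈ D^{−α,2} iff the Riemann–Liouville integral of order α of λ ↦ ∫ |SΦ(λu)|² dν(u), evaluated at 1, is finite.) -/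
open MeasureTheory ENNReal Real Set

/-!
Integrating the series term by term (monotone convergence), the `n`-th term against the kernel
`(1 - λ)^(α - 1)` is the Beta integral `B(2n + 1, α) = Γ(2n + 1) Γ(α) / Γ(2n + 1 + α)`, which
gives the identity. For finiteness, log-convexity of `Γ` gives Wendel's bounds
`Γ(x + α) ≤ x^α Γ(x) ≤ 2 Γ(x + α)` for `x ≥ 1`, so `Γ(2n + 1) / Γ(2n + 1 + α)` is comparable to
`(2n + 1)^(-α)`, hence to `1 / (1 + n^α)`, with constants independent of `n`.
-/

theorem Real.Gamma_add_le_Gamma_mul_rpow {x s : ℝ} (hx : 0 < x) (hs₀ : 0 < s) (hs₁ : s < 1) :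
    Gamma (x + s) ≤ Gamma x * x ^ s := by
  have hΓ : 0 < Gamma x := Gamma_pos_of_pos hx
  calc Gamma (x + s) = Gamma ((1 - s) * x + s * (x + 1)) := by ring_nf
    _ ≤ Gamma x ^ (1 - s) * Gamma (x + 1) ^ s :=
      Gamma_mul_add_mul_le_rpow_Gamma_mul_rpow_Gamma hx (by linarith) (by linarith) hs₀ (by ring)
    _ = Gamma x * x ^ s := by
      rw [Gamma_add_one hx.ne', mul_rpow hx.le hΓ.le, mul_left_comm, ← rpow_add hΓ,
        sub_add_cancel, rpow_one, mul_comm]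

theorem Real.rpow_mul_Gamma_le_two_mul_Gamma_add {x s : ℝ} (hx : 1 ≤ x) (hs₀ : 0 < s)
    (hs₁ : s < 1) : x ^ s * Gamma x ≤ 2 * Gamma (x + s) := by
  have hx₀ : 0 < x := by linarith
  have hxs : 0 < x + s := by linarith
  have hpow : (x + s) ^ (1 - s) ≤ 2 * x ^ (1 - s) :=
    calc (x + s) ^ (1 - s) ≤ (2 * x) ^ (1 - s) := by gcongr; linarith
      _ = 2 ^ (1 - s) * x ^ (1 - s) := mul_rpow zero_le_two hx₀.le
      _ ≤ 2 * x ^ (1 - s) := by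
        gcongr
        exact rpow_le_self_of_one_le one_le_two (by linarith)
  have hwendel : Gamma (x + 1) ≤ Gamma (x + s) * (x + s) ^ (1 - s) := by
    simpa using Gamma_add_le_Gamma_mul_rpow hxs (by linarith : 0 < 1 - s) (by linarith)
  refine le_of_mul_le_mul_left ?_ (rpow_pos_of_pos hx₀ (1 - s))
  calc x ^ (1 - s) * (x ^ s * Gamma x) = x * Gamma x := by
        rw [← mul_assoc, ← rpow_add hx₀, sub_add_cancel, rpow_one]
    _ ≤ Gamma (x + s) * (x + s) ^ (1 - s) := by rwa [← Gamma_add_one hx₀.ne']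
    _ ≤ Gamma (x + s) * (2 * x ^ (1 - s)) := by gcongr
    _ = x ^ (1 - s) * (2 * Gamma (x + s)) := by ring

theorem lintegral_rpow_mul_one_sub_rpow {u v : ℝ} (hu : 0 < u) (hv : 0 < v) :
    ∫⁻ x in Ioo (0 : ℝ) 1, ENNReal.ofReal (x ^ (u - 1) * (1 - x) ^ (v - 1)) =
      ENNReal.ofReal (ProbabilityTheory.beta u v) := by
  have hB := ProbabilityTheory.beta_pos hu hv
  have hnorm := ProbabilityTheory.lintegral_betaPDF_eq_one hu hv
  simp_rw [ProbabilityTheory.lintegral_betaPDF, mul_assoc,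
    ENNReal.ofReal_mul (one_div_pos.2 hB).le] at hnorm
  rw [lintegral_const_mul _ (by fun_prop), mul_comm] at hnorm
  rw [ENNReal.eq_inv_of_mul_eq_one_left hnorm, ← ENNReal.ofReal_inv_of_pos (one_div_pos.2 hB),
    one_div, inv_inv]

theorem lintegral_one_sub_rpow_mul_pow {α : ℝ} (hα : 0 < α) (k : ℕ) :
    ∫⁻ x in Ioo (0 : ℝ) 1, ENNReal.ofReal ((1 - x) ^ (α - 1)) * ENNReal.ofReal x ^ k =
      ENNReal.ofReal (Gamma (k + 1) * Gamma α / Gamma (k + 1 + α)) := by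
  have hbeta := lintegral_rpow_mul_one_sub_rpow (u := k + 1) (v := α) (by positivity) hα
  rw [ProbabilityTheory.beta, add_sub_cancel_right] at hbeta
  rw [← hbeta]
  refine setLIntegral_congr_fun measurableSet_Ioo fun x hx => ?_
  rw [Real.rpow_natCast, ← ENNReal.ofReal_pow hx.1.le,
    ← ENNReal.ofReal_mul (rpow_nonneg (sub_nonneg.2 hx.2.le) _), mul_comm]

theorem riemannLiouville_tsum_pow {α : ℝ} (hα : 0 < α) (k : ℕ → ℕ) (c : ℕ → ℝ≥0∞) :
    ENNReal.ofReal (1 / Gamma α) *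
        ∫⁻ x in Ioo (0 : ℝ) 1, ENNReal.ofReal ((1 - x) ^ (α - 1)) *
          ∑' n, c n * ENNReal.ofReal x ^ k n =
      ∑' n, ENNReal.ofReal (Gamma (k n + 1) / Gamma (k n + 1 + α)) * c n := by
  have hΓ : 0 < Gamma α := Gamma_pos_of_pos hα
  simp_rw [← ENNReal.tsum_mul_left]
  rw [lintegral_tsum fun n => by fun_prop, ← ENNReal.tsum_mul_left]
  refine tsum_congr fun n => ?_
  simp_rw [mul_left_comm _ (c n)]
  rw [lintegral_const_mul _ (by fun_prop), lintegral_one_sub_rpow_mul_pow hα, mul_left_comm,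
    ← ENNReal.ofReal_mul (one_div_pos.2 hΓ).le, mul_comm]
  congr 2
  field_simp

theorem two_mul_add_one_rpow_le {α : ℝ} (hα₀ : 0 ≤ α) (hα₁ : α ≤ 1) (n : ℕ) :
    (2 * (n : ℝ) + 1) ^ α ≤ 2 * (1 + (n : ℝ) ^ α) :=
  calc (2 * (n : ℝ) + 1) ^ α ≤ (2 * n) ^ α + 1 ^ α :=
        rpow_add_le_add_rpow (by positivity) zero_le_one hα₀ hα₁
    _ = 2 ^ α * (n : ℝ) ^ α + 1 := by rw [mul_rpow zero_le_two n.cast_nonneg, Real.one_rpow]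
    _ ≤ 2 * (n : ℝ) ^ α + 1 := by
        gcongr
        exact rpow_le_self_of_one_le one_le_two hα₁
    _ ≤ 2 * (1 + (n : ℝ) ^ α) := by linarith

theorem one_add_rpow_le_two_mul_rpow {α : ℝ} (hα : 0 ≤ α) (n : ℕ) :
    1 + (n : ℝ) ^ α ≤ 2 * (2 * (n : ℝ) + 1) ^ α := by
  have h₁ : 1 ≤ (2 * (n : ℝ) + 1) ^ α := one_le_rpow (by linarith [n.cast_nonneg (α := ℝ)]) hα
  have h₂ : (n : ℝ) ^ α ≤ (2 * (n : ℝ) + 1) ^ α := by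
    gcongr
    linarith [n.cast_nonneg (α := ℝ)]
  linarith

theorem ENNReal.inv_one_add_ofReal {y : ℝ} (hy : 0 ≤ y) :
    (1 + ENNReal.ofReal y)⁻¹ = ENNReal.ofReal (1 + y)⁻¹ := by
  rw [ENNReal.ofReal_inv_of_pos (by linarith), ENNReal.ofReal_add zero_le_one hy, ofReal_one]

theorem ofReal_Gamma_div_Gamma_add_le {α : ℝ} (hα₀ : 0 < α) (hα₁ : α < 1) (n : ℕ) :
    ENNReal.ofReal (Gamma (2 * n + 1) / Gamma (2 * n + 1 + α)) ≤
      4 * (1 + ENNReal.ofReal ((n : ℝ) ^ α))⁻¹ := by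
  have hx : (1 : ℝ) ≤ 2 * n + 1 := by linarith [n.cast_nonneg (α := ℝ)]
  have hΓ : 0 < Gamma (2 * n + 1 + α) := Gamma_pos_of_pos (by linarith)
  rw [inv_one_add_ofReal (by positivity), ← ofReal_ofNat, ← ENNReal.ofReal_mul (by norm_num)]
  refine ENNReal.ofReal_le_ofReal ?_
  rw [← div_eq_mul_inv, div_le_div_iff₀ hΓ (by positivity)]
  calc Gamma (2 * n + 1) * (1 + (n : ℝ) ^ α)
      ≤ Gamma (2 * n + 1) * (2 * (2 * n + 1) ^ α) := by
        gcongr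
        exact one_add_rpow_le_two_mul_rpow hα₀.le n
    _ = 2 * ((2 * n + 1) ^ α * Gamma (2 * n + 1)) := by ring
    _ ≤ 2 * (2 * Gamma (2 * n + 1 + α)) := by
        gcongr 2 * ?_
        exact rpow_mul_Gamma_le_two_mul_Gamma_add hx hα₀ hα₁
    _ = 4 * Gamma (2 * n + 1 + α) := by ring

theorem inv_one_add_rpow_le_ofReal_Gamma_div_Gamma_add {α : ℝ} (hα₀ : 0 < α) (hα₁ : α < 1)
    (n : ℕ) :
    (1 + ENNReal.ofReal ((n : ℝ) ^ α))⁻¹ ≤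
      2 * ENNReal.ofReal (Gamma (2 * n + 1) / Gamma (2 * n + 1 + α)) := by
  have hx : (0 : ℝ) < 2 * n + 1 := by positivity
  have hΓ : 0 < Gamma (2 * n + 1 + α) := Gamma_pos_of_pos (by linarith)
  rw [inv_one_add_ofReal (by positivity), ← ofReal_ofNat, ← ENNReal.ofReal_mul (by norm_num)]
  refine ENNReal.ofReal_le_ofReal ?_
  rw [← mul_div_assoc, inv_eq_one_div, div_le_div_iff₀ (by positivity) hΓ, one_mul]
  calc Gamma (2 * n + 1 + α) ≤ Gamma (2 * n + 1) * (2 * n + 1) ^ α :=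
        Gamma_add_le_Gamma_mul_rpow hx hα₀ hα₁
    _ ≤ Gamma (2 * n + 1) * (2 * (1 + (n : ℝ) ^ α)) := by
        gcongr
        exact two_mul_add_one_rpow_le hα₀.le hα₁.le n
    _ = 2 * Gamma (2 * n + 1) * (1 + (n : ℝ) ^ α) := by ring

theorem ENNReal.tsum_lt_top_of_le_mul {ι : Type*} {f g : ι → ℝ≥0∞} {C : ℝ≥0∞} (hC : C ≠ ⊤)
    (hfg : ∀ i, f i ≤ C * g i) (hg : ∑' i, g i < ⊤) : ∑' i, f i < ⊤ :=
  calc ∑' i, f i ≤ ∑' i, C * g i := ENNReal.tsum_le_tsum hfg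
    _ = C * ∑' i, g i := ENNReal.tsum_mul_left
    _ < ⊤ := ENNReal.mul_lt_top hC.lt_top hg

/-- Sequence form of Theorem 2.11 for `m = 0`: for `α ∈ (0,1)`, `a : ℕ → [0,∞]` and
`f(λ) = ∑ n! λ^(2n) a n`, the Riemann--Liouville integral
`(1/Γ(α)) ∫₀¹ (1−λ)^(α−1) f(λ) dλ` equals `∑ (Γ(2n+1)/Γ(2n+1+α)) n! a n`,
and this is finite iff `∑ (n!/(1+n^α)) a n < ∞`. -/
theorem dual_Dalpha_characterization (α : ℝ) (hα : α ∈ Set.Ioo (0 : ℝ) 1) (a : ℕ → ℝ≥0∞) :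
    (ENNReal.ofReal (1 / Real.Gamma α) *
        ∫⁻ x in Set.Ioo (0 : ℝ) 1, ENNReal.ofReal ((1 - x) ^ (α - 1)) *
          ∑' n : ℕ, (n.factorial : ℝ≥0∞) * ENNReal.ofReal x ^ (2 * n) * a n) =
      (∑' n : ℕ, ENNReal.ofReal (Real.Gamma (2 * (n : ℝ) + 1) / Real.Gamma (2 * (n : ℝ) + 1 + α)) *
        (n.factorial : ℝ≥0∞) * a n) ∧
    ((ENNReal.ofReal (1 / Real.Gamma α) *
        ∫⁻ x in Set.Ioo (0 : ℝ) 1, ENNReal.ofReal ((1 - x) ^ (α - 1)) *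
          ∑' n : ℕ, (n.factorial : ℝ≥0∞) * ENNReal.ofReal x ^ (2 * n) * a n) < ⊤ ↔
      (∑' n : ℕ, (n.factorial : ℝ≥0∞) / (1 + ENNReal.ofReal ((n : ℝ) ^ α)) * a n) < ⊤) := by
  obtain ⟨hα₀, hα₁⟩ := hα
  have hseries : ENNReal.ofReal (1 / Real.Gamma α) *
        ∫⁻ x in Set.Ioo (0 : ℝ) 1, ENNReal.ofReal ((1 - x) ^ (α - 1)) *
          ∑' n : ℕ, (n.factorial : ℝ≥0∞) * ENNReal.ofReal x ^ (2 * n) * a n =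
      ∑' n : ℕ, ENNReal.ofReal (Real.Gamma (2 * (n : ℝ) + 1) / Real.Gamma (2 * (n : ℝ) + 1 + α)) *
        (n.factorial : ℝ≥0∞) * a n := by
    simp_rw [mul_right_comm _ (ENNReal.ofReal _ ^ _), riemannLiouville_tsum_pow hα₀, Nat.cast_mul,
      Nat.cast_ofNat, mul_assoc]
  refine ⟨hseries, ?_⟩
  rw [hseries]
  have hweight (n : ℕ) : (n.factorial : ℝ≥0∞) / (1 + ENNReal.ofReal ((n : ℝ) ^ α)) * a n =
      (1 + ENNReal.ofReal ((n : ℝ) ^ α))⁻¹ * (n.factorial * a n) := by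
    rw [div_eq_mul_inv]; ring
  simp_rw [hweight, mul_assoc]
  exact ⟨ENNReal.tsum_lt_top_of_le_mul ofNat_ne_top fun n =>
      (mul_le_mul_left (inv_one_add_rpow_le_ofReal_Gamma_div_Gamma_add hα₀ hα₁ n) _).trans_eq
        (mul_assoc _ _ _),
    ENNReal.tsum_lt_top_of_le_mul ofNat_ne_top fun n =>
      (mul_le_mul_left (ofReal_Gamma_div_Gamma_add_le hα₀ hα₁ n) _).trans_eq (mul_assoc _ _ _)⟩
end

section
/- Let α ∈ (0,1). Let a : ℕ → ℝ satisfy a(n) ≥ 0 for all n and ∑_{n=0}^∞ n!·a(n) < ∞ (summable). Define f : ℝ → ℝ by f(λ) = ∑_{n=0}^∞ n!·λ^(2n)·a(n). Then for every λ ∈ (0,1), the Riemann–Liouville fractional derivative of f of order α at λ satisfies D^α_{0+}f(λ) = ∑_{n=0}^∞ (Γ(2n+1)/Γ(2n+1−α))·n!·λ^(2n−α)·a(n). -/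
/-!
Termwise, the Riemann–Liouville integral of `t ^ (2n)` is a Beta integral:
`∫₀ˣ t ^ (2n) (x - t) ^ (-α) dt = Γ(2n+1) Γ(1-α) / Γ(2n+2-α) · x ^ (2n+1-α)`.
All terms are nonnegative, so the integral of `f` is the sum of these, a series
`∑ cₙ x ^ (2n+1-α)` whose coefficients are bounded because the Gamma ratio is. Such a series
can be differentiated termwise on `(0, 1)`, and `Γ(2n+2-α) = (2n+1-α) Γ(2n+1-α)` turns the
result into the claimed one.
-/

open Real MeasureTheory Set Filter Topology

theorem integral_rpow_mul_sub_rpow_s12 {p q x : ℝ} (hp : 0 < p) (hq : 0 < q) (hx : 0 < x) :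
    ∫ t in (0 : ℝ)..x, t ^ (p - 1) * (x - t) ^ (q - 1) =
      Gamma p * Gamma q / Gamma (p + q) * x ^ (p + q - 1) := by
  have hbeta : Complex.betaIntegral p q = Gamma p * Gamma q / Gamma (p + q) := by
    have hpq : ((Gamma (p + q) : ℝ) : ℂ) ≠ 0 := by
      exact_mod_cast (Gamma_pos_of_pos (add_pos hp hq)).ne'
    rw [eq_div_iff hpq, ← Complex.Gamma_ofReal, ← Complex.Gamma_ofReal, ← Complex.Gamma_ofReal,
      Complex.Gamma_mul_Gamma_eq_betaIntegral (by simpa) (by simpa), Complex.ofReal_add]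
    ring
  apply Complex.ofReal_injective
  rw [← intervalIntegral.integral_ofReal]
  have hcongr : EqOn (fun t : ℝ => ((t ^ (p - 1) * (x - t) ^ (q - 1) : ℝ) : ℂ))
      (fun t : ℝ => (t : ℂ) ^ ((p : ℂ) - 1) * ((x : ℂ) - t) ^ ((q : ℂ) - 1)) (uIcc 0 x) := by
    intro t ht
    rw [uIcc_of_le hx.le] at ht
    push_cast [Complex.ofReal_cpow ht.1, Complex.ofReal_cpow (sub_nonneg.2 ht.2)]
    ring_nf
  rw [intervalIntegral.integral_congr hcongr, Complex.betaIntegral_scaled _ _ hx, hbeta]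
  push_cast [Complex.ofReal_cpow hx.le]
  ring_nf

theorem intervalIntegrable_pow_mul_sub_rpow (k : ℕ) {s : ℝ} (hs : -1 < s) (x : ℝ) :
    IntervalIntegrable (fun t => t ^ k * (x - t) ^ s) volume 0 x := by
  have h := (intervalIntegral.intervalIntegrable_rpow' hs (a := 0) (b := x)).comp_sub_left x
  simp only [sub_zero, sub_self] at h
  exact h.symm.continuousOn_mul (continuous_pow k).continuousOn

theorem integral_pow_mul_sub_rpow (k : ℕ) {s x : ℝ} (hs : -1 < s) (hx : 0 < x) :
    ∫ t in (0 : ℝ)..x, t ^ k * (x - t) ^ s =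
      Gamma (k + 1) * Gamma (s + 1) / Gamma (k + s + 2) * x ^ (k + s + 1) := by
  have h := integral_rpow_mul_sub_rpow_s12 (p := k + 1) (q := s + 1) (by positivity) (by linarith) hx
  simp only [add_sub_cancel_right, rpow_natCast] at h
  rw [h]
  ring_nf

theorem rpow_two_mul_add (n : ℕ) {y : ℝ} (hy : 0 < y) (s : ℝ) :
    y ^ (2 * n + s) = (y ^ 2) ^ n * y ^ s := by
  rw [rpow_add hy, ← pow_mul, ← rpow_natCast]
  push_cast
  rfl

theorem hasDerivAt_tsum_mul_rpow {b : ℕ → ℝ} {B : ℝ} (hb : ∀ n, |b n| ≤ B) (s : ℝ) {x : ℝ}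
    (hx0 : 0 < x) (hx1 : x < 1) :
    HasDerivAt (fun y => ∑' n : ℕ, b n * y ^ (2 * n + s))
      (∑' n : ℕ, b n * ((2 * n + s) * x ^ (2 * n + s - 1))) x := by
  obtain ⟨δ, hδ, hδx⟩ := exists_between hx0
  obtain ⟨r, hxr, hr1⟩ := exists_between hx1
  have hxt : x ∈ Ioo δ r := ⟨hδx, hxr⟩
  have hr2 : r ^ 2 < 1 := by nlinarith
  obtain ⟨M, hM⟩ := (isCompact_Icc (a := δ) (b := r)).exists_bound_of_continuousOn
    (f := fun y : ℝ => y ^ (s - 1)) fun y hy =>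
      (continuousAt_rpow_const _ _ (Or.inl (by linarith [hy.1]))).continuousWithinAt
  have hB : 0 ≤ B := (abs_nonneg _).trans (hb 0)
  have hsum_geom : Summable fun n : ℕ => (2 * n + |s|) * (r ^ 2) ^ n := by
    have h1 := summable_pow_mul_geometric_of_norm_lt_one 1
      (by rwa [norm_of_nonneg (by positivity)] : ‖r ^ 2‖ < 1)
    have h2 := summable_geometric_of_lt_one (by positivity) hr2
    simpa [add_mul, mul_assoc] using (h1.mul_left 2).add (h2.mul_left |s|)
  refine hasDerivAt_tsum_of_isPreconnected
    (u := fun n : ℕ => B * M * ((2 * n + |s|) * (r ^ 2) ^ n)) (hsum_geom.mul_left _)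
    isOpen_Ioo isPreconnected_Ioo
    (fun n y hy => ((hasDerivAt_rpow_const (Or.inl (by linarith [hy.1]))).const_mul (b n)))
    ?_ hxt ?_ hxt
  · intro n y hy
    have hy0 : 0 < y := by linarith [hy.1]
    rw [add_sub_assoc, rpow_two_mul_add n hy0, norm_mul, norm_mul, norm_mul, norm_pow, norm_pow,
      norm_of_nonneg hy0.le]
    have h1 : ‖(2 * n + s : ℝ)‖ ≤ 2 * n + |s| := (norm_add_le _ _).trans (by simp)
    have h2 : y ^ 2 ≤ r ^ 2 := pow_le_pow_left₀ hy0.le hy.2.le 2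
    have h3 := hM y (Ioo_subset_Icc_self hy)
    calc ‖b n‖ * (‖(2 * n + s : ℝ)‖ * ((y ^ 2) ^ n * ‖y ^ (s - 1)‖))
        ≤ B * ((2 * n + |s|) * ((r ^ 2) ^ n * M)) := by gcongr; exact hb n
      _ = _ := by ring
  · refine Summable.of_norm_bounded ((summable_geometric_of_lt_one (by positivity)
      (by nlinarith : x ^ 2 < 1)).mul_left (B * x ^ s)) fun n => ?_
    rw [rpow_two_mul_add n hx0, norm_mul, norm_mul, norm_pow, norm_of_nonneg (sq_nonneg x),
      norm_of_nonneg (rpow_nonneg hx0.le _)]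
    calc ‖b n‖ * ((x ^ 2) ^ n * x ^ s) ≤ B * ((x ^ 2) ^ n * x ^ s) := by gcongr; exact hb n
      _ = _ := by ring

theorem abs_Gamma_mul_Gamma_div_Gamma_le (k : ℕ) {s : ℝ} (hs : -1 < s) :
    |Gamma (k + 1) * Gamma (s + 1) / Gamma (k + s + 2)| ≤
      (1 + (Gamma (s + 2))⁻¹) * Gamma (s + 1) := by
  have hΓ1 : 0 < Gamma (s + 1) := Gamma_pos_of_pos (by linarith)
  have hΓ2 : 0 < Gamma (s + 2) := Gamma_pos_of_pos (by linarith)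
  have hΓk : 0 < Gamma (k + s + 2) := Gamma_pos_of_pos (by linarith [k.cast_nonneg (α := ℝ)])
  rw [abs_of_nonneg (by positivity [Gamma_pos_of_pos (k.cast_add_one_pos (α := ℝ))]),
    mul_div_right_comm]
  refine mul_le_mul_of_nonneg_right ?_ hΓ1.le
  rcases k.eq_zero_or_pos with rfl | hk
  · simp [Gamma_one]
  · have hk1 : (1 : ℝ) ≤ k := by exact_mod_cast hk
    have hle : Gamma (k + 1) ≤ Gamma (k + s + 2) :=
      Gamma_strictMonoOn_Ici.monotoneOn (by simp; linarith) (by simp; linarith) (by linarith)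
    linarith [(div_le_one hΓk).2 hle, inv_pos.2 hΓ2]

theorem integral_tsum_of_nonneg {X : Type*} [MeasurableSpace X] {μ : Measure X}
    {F : ℕ → X → ℝ} (hF : ∀ n, Integrable (F n) μ) (hF0 : ∀ n, 0 ≤ᵐ[μ] F n)
    (hsum : Summable fun n => ∫ x, F n x ∂μ) :
    ∫ x, ∑' n, F n x ∂μ = ∑' n, ∫ x, F n x ∂μ := by
  refine (integral_tsum_of_summable_integral_norm hF (hsum.congr fun n => ?_)).symm
  exact integral_congr_ae ((hF0 n).mono fun x hx => (norm_of_nonneg hx).symm)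

theorem integral_tsum_mul_pow_mul_sub_rpow {b : ℕ → ℝ} (hb : ∀ n, 0 ≤ b n) (hbs : Summable b)
    {s x : ℝ} (hs : -1 < s) (hx0 : 0 < x) (hx1 : x ≤ 1) :
    ∫ t in (0 : ℝ)..x, (∑' n : ℕ, b n * t ^ (2 * n)) * (x - t) ^ s =
      ∑' n : ℕ, b n * (Gamma (2 * n + 1) * Gamma (s + 1) / Gamma (2 * n + s + 2)) *
        x ^ (2 * n + (s + 1)) := by
  have hval (n : ℕ) : ∫ t in (0 : ℝ)..x, b n * (t ^ (2 * n) * (x - t) ^ s) =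
      b n * (Gamma (2 * n + 1) * Gamma (s + 1) / Gamma (2 * n + s + 2)) *
        x ^ (2 * n + (s + 1)) := by
    rw [intervalIntegral.integral_const_mul, integral_pow_mul_sub_rpow _ hs hx0]
    push_cast
    ring_nf
  have hint (n : ℕ) : IntegrableOn (fun t => b n * (t ^ (2 * n) * (x - t) ^ s)) (Ioc 0 x) :=
    (intervalIntegrable_iff_integrableOn_Ioc_of_le hx0.le).1
      ((intervalIntegrable_pow_mul_sub_rpow _ hs x).const_mul _)
  have hnonneg (n : ℕ) : 0 ≤ᵐ[volume.restrict (Ioc 0 x)]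
      fun t => b n * (t ^ (2 * n) * (x - t) ^ s) := by
    filter_upwards [ae_restrict_mem measurableSet_Ioc] with t ht
    have := ht.1.le
    have := sub_nonneg.2 ht.2
    have := hb n
    positivity
  have hsum : Summable fun n : ℕ => b n * (Gamma (2 * n + 1) * Gamma (s + 1) /
      Gamma (2 * n + s + 2)) * x ^ (2 * n + (s + 1)) := by
    refine Summable.of_norm_bounded
      (hbs.mul_right ((1 + (Gamma (s + 2))⁻¹) * Gamma (s + 1) * x ^ (s + 1))) fun n => ?_
    have hβ := abs_Gamma_mul_Gamma_div_Gamma_le (2 * n) hs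
    push_cast at hβ
    have hpow : x ^ (2 * n + (s + 1)) ≤ x ^ (s + 1) := by
      rw [rpow_two_mul_add n hx0]
      exact mul_le_of_le_one_left (rpow_nonneg hx0.le _) (pow_le_one₀ (sq_nonneg x)
        (pow_le_one₀ hx0.le hx1))
    rw [norm_mul, norm_mul, norm_of_nonneg (hb n), norm_of_nonneg (rpow_nonneg hx0.le _),
      Real.norm_eq_abs]
    have hΓ1 : 0 < Gamma (s + 1) := Gamma_pos_of_pos (by linarith)
    have hΓ2 : 0 < Gamma (s + 2) := Gamma_pos_of_pos (by linarith)
    exact (mul_assoc _ _ _).trans_le (mul_le_mul_of_nonneg_left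
      (mul_le_mul hβ hpow (rpow_nonneg hx0.le _) (by positivity)) (hb n))
  simp_rw [intervalIntegral.integral_of_le hx0.le] at hval ⊢
  conv_lhs => simp only [← tsum_mul_right, mul_assoc]
  rw [integral_tsum_of_nonneg hint hnonneg (by simpa only [hval] using hsum)]
  simp_rw [hval]

/-- For `α ∈ (0,1)`, `a ≥ 0` with `∑ n! a n < ∞` and `f(λ) = ∑ n! λ^(2n) a n`, the
Riemann--Liouville fractional derivative of `f` of order `α` at `λ ∈ (0,1)` is
`∑ (Γ(2n+1)/Γ(2n+1−α)) n! λ^(2n−α) a n`. -/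
theorem rl_deriv_bargmann_segal_series (α : ℝ) (hα : α ∈ Set.Ioo (0 : ℝ) 1)
    (a : ℕ → ℝ) (ha : ∀ n, 0 ≤ a n)
    (hsum : Summable fun n => (n.factorial : ℝ) * a n)
    (f : ℝ → ℝ) (hf : ∀ x : ℝ, f x = ∑' n : ℕ, (n.factorial : ℝ) * x ^ (2 * n) * a n)
    (l : ℝ) (hl : l ∈ Set.Ioo (0 : ℝ) 1) :
    (1 / Real.Gamma (1 - α)) *
        deriv (fun x : ℝ => ∫ t in (0 : ℝ)..x, f t * (x - t) ^ (-α)) l =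
      ∑' n : ℕ, (Real.Gamma (2 * (n : ℝ) + 1) / Real.Gamma (2 * (n : ℝ) + 1 - α)) *
        (n.factorial : ℝ) * l ^ (2 * (n : ℝ) - α) * a n := by
  have hs : -1 < -α := by linarith [hα.2]
  obtain rfl : f = fun x => ∑' n : ℕ, (n.factorial * a n) * x ^ (2 * n) :=
    funext fun x => by simp only [hf, mul_right_comm]
  set b : ℕ → ℝ := fun n => n.factorial * a n
  have hb (n : ℕ) : 0 ≤ b n := by positivity [ha n]
  set c : ℕ → ℝ := fun n =>
    b n * (Gamma (2 * n + 1) * Gamma (-α + 1) / Gamma (2 * n + -α + 2))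
  have hc (n : ℕ) : |c n| ≤ (∑' n, b n) * ((1 + (Gamma (-α + 2))⁻¹) * Gamma (-α + 1)) := by
    have hβ := abs_Gamma_mul_Gamma_div_Gamma_le (2 * n) hs
    push_cast at hβ
    rw [abs_mul, abs_of_nonneg (hb n)]
    exact mul_le_mul (hsum.le_tsum n fun i _ => hb i) hβ (abs_nonneg _)
      (tsum_nonneg hb)
  have hI : (fun x : ℝ => ∫ t in (0 : ℝ)..x, (∑' n, b n * t ^ (2 * n)) * (x - t) ^ (-α))
      =ᶠ[𝓝 l] fun x => ∑' n : ℕ, c n * x ^ (2 * n + (-α + 1)) := by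
    filter_upwards [Ioo_mem_nhds hl.1 hl.2] with x hx
    exact integral_tsum_mul_pow_mul_sub_rpow hb hsum hs hx.1 hx.2.le
  rw [hI.deriv_eq, (hasDerivAt_tsum_mul_rpow hc _ hl.1 hl.2).deriv, ← tsum_mul_left]
  refine tsum_congr fun n => ?_
  have hpos : 0 < 2 * (n : ℝ) + 1 - α := by linarith [n.cast_nonneg (α := ℝ), hα.2]
  have hrec : Gamma (2 * n + -α + 2) = (2 * n + 1 - α) * Gamma (2 * n + 1 - α) := by
    rw [← Gamma_add_one hpos.ne']
    ring_nf
  have hΓ : Gamma (1 - α) ≠ 0 := (Gamma_pos_of_pos (by linarith [hα.2])).ne'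
  simp only [c, b, hrec, show -α + 1 = 1 - α by ring]
  field_simp
  ring_nf
end

section
/- Let a : ℕ → [0,∞] (extended nonnegative reals). Define f : (0,1) → [0,∞] by f(λ) = ∑_{n=0}^∞ n!·λ^(2n)·a(n), a tsum in [0,∞]. For m ∈ ℕ let J^m denote the m-fold iterated integration operator, J^0 g = g and (J^(k+1) g)(x) = ∫₀^x (J^k g)(t) dt (Lebesgue lower integral). Then for every m ≥ 1, (J^m f)(1) = ∑_{n=0}^∞ n!·((2n)!/(2n+m)!)·a(n), and this quantity is finite if and only if ∑_{n=0}^∞ (n!/(1+n^m))·a(n) < ∞. (Sequence form of Theorem 2.10: Φ ∈ D^{−m,2} iff the m-fold iterated integral of λ ↦ ∫ |SΦ(λu)|² dν(u) over 0 < λ₁ < ⋯ < λ_m < 1 is finite.) -/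
open MeasureTheory ENNReal

/-- The `k`-fold iterated integration operator: `J^0 g = g` and
`(J^(k+1) g)(x) = ∫₀ˣ (J^k g)(t) dt` (lower Lebesgue integral). -/
noncomputable def iterIntegral : ℕ → (ℝ → ℝ≥0∞) → (ℝ → ℝ≥0∞)
  | 0, g => g
  | k + 1, g => fun x => ∫⁻ t in Set.Ioo (0 : ℝ) x, iterIntegral k g t

open Nat Set

/-!
Monotone convergence lets `J^m` act term by term, and `J^m` sends `λ ^ p` to
`(p! / (p + m)!) λ ^ (p + m)`; at `λ = 1` this gives the series formula. The ratio
`(2n + m)! / (2n)!` is a product of `m` factors lying between `2n + 1` and `2n + m`, hence is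
bounded above and below by constant multiples of `1 + n ^ m` (constants depending only on `m`),
so the two series converge or diverge together.
-/

namespace Nat

lemma factorial_two_mul_mul_one_add_pow_le (n : ℕ) {m : ℕ} (hm : m ≠ 0) :
    (2 * n)! * (1 + n ^ m) ≤ (2 * n + m)! :=
  calc (2 * n)! * (1 + n ^ m) ≤ (2 * n)! * (2 * n + 1) ^ m := by
        gcongr
        calc 1 + n ^ m = 1 ^ m + n ^ m := by rw [one_pow]
          _ ≤ (1 + n) ^ m := pow_add_pow_le (zero_le _) (zero_le _) hm
          _ ≤ (2 * n + 1) ^ m := Nat.pow_le_pow_left (by omega) m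
    _ ≤ (2 * n + m)! := factorial_mul_pow_le_factorial

lemma factorial_add_le_pow_mul_factorial (k m : ℕ) : (k + m)! ≤ (k + m) ^ m * k ! := by
  rw [← factorial_mul_ascFactorial, mul_comm]
  gcongr
  exact ascFactorial_le_pow_add k m

lemma factorial_two_mul_add_le_mul_one_add_pow_mul (n m : ℕ) :
    (2 * n + m)! ≤ (2 * (m + 2)) ^ m * (1 + n ^ m) * (2 * n)! := by
  refine (factorial_add_le_pow_mul_factorial _ _).trans (Nat.mul_le_mul_right _ ?_)
  calc (2 * n + m) ^ m ≤ ((m + 2) * (n + 1)) ^ m := by gcongr; nlinarith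
    _ = (m + 2) ^ m * (n + 1) ^ m := mul_pow _ _ _
    _ ≤ (m + 2) ^ m * (2 ^ (m - 1) * (n ^ m + 1 ^ m)) := by
        gcongr
        exact add_pow_le (zero_le _) (zero_le _) m
    _ ≤ (m + 2) ^ m * (2 ^ m * (1 + n ^ m)) := by
        rw [one_pow, add_comm (n ^ m)]; gcongr <;> omega
    _ = (2 * (m + 2)) ^ m * (1 + n ^ m) := by rw [mul_pow]; ring

end Nat

lemma factorial_div_factorial_le_inv (n : ℕ) {m : ℕ} (hm : m ≠ 0) :
    ((2 * n)! : ℝ≥0∞) / (2 * n + m)! ≤ (1 + (n : ℝ≥0∞) ^ m)⁻¹ := by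
  rw [ENNReal.le_inv_iff_mul_le, ← ENNReal.mul_div_right_comm]
  refine ENNReal.div_le_of_le_mul ?_
  rw [one_mul]
  exact_mod_cast Nat.factorial_two_mul_mul_one_add_pow_le n hm

lemma inv_le_mul_factorial_div_factorial (n m : ℕ) :
    (1 + (n : ℝ≥0∞) ^ m)⁻¹ ≤ ((2 * (m + 2)) ^ m : ℕ) * (((2 * n)! : ℝ≥0∞) / (2 * n + m)!) := by
  rw [ENNReal.inv_le_iff_le_mul (by simp) (by simp), ← mul_div_assoc, ← mul_div_assoc,
    ENNReal.le_div_iff_mul_le (by simp [factorial_ne_zero]) (by simp), one_mul]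
  exact_mod_cast (Nat.factorial_two_mul_add_le_mul_one_add_pow_mul n m).trans_eq (by ring)

lemma ENNReal.tsum_lt_top_iff_of_le_of_le_mul {ι : Type*} {f g : ι → ℝ≥0∞} {C : ℝ≥0∞}
    (hC : C ≠ ⊤) (hfg : ∀ i, f i ≤ g i) (hgf : ∀ i, g i ≤ C * f i) :
    ∑' i, f i < ⊤ ↔ ∑' i, g i < ⊤ := by
  refine ⟨fun h => (ENNReal.tsum_le_tsum hgf).trans_lt ?_, (ENNReal.tsum_le_tsum hfg).trans_lt⟩
  rw [ENNReal.tsum_mul_left]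
  exact mul_lt_top hC.lt_top h

lemma lintegral_Ioo_ofReal_pow (p : ℕ) (x : ℝ) :
    ∫⁻ t in Ioo 0 x, ENNReal.ofReal t ^ p = ENNReal.ofReal x ^ (p + 1) / (p + 1) := by
  rcases le_or_gt x 0 with hx | hx
  · simp [Ioo_eq_empty_of_le hx, ENNReal.ofReal_of_nonpos hx]
  have hint : IntegrableOn (fun t : ℝ => t ^ p) (Ioo 0 x) :=
    (continuous_pow p).integrableOn_Icc.mono_set Ioo_subset_Icc_self
  calc ∫⁻ t in Ioo 0 x, ENNReal.ofReal t ^ p = ∫⁻ t in Ioo 0 x, ENNReal.ofReal (t ^ p) :=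
        setLIntegral_congr_fun measurableSet_Ioo fun t ht => (ENNReal.ofReal_pow ht.1.le p).symm
    _ = ENNReal.ofReal (∫ t in Ioo 0 x, t ^ p) :=
        (ofReal_integral_eq_lintegral_ofReal hint
          (ae_restrict_of_forall_mem measurableSet_Ioo fun t ht => pow_nonneg ht.1.le p)).symm
    _ = ENNReal.ofReal (x ^ (p + 1) / (p + 1)) := by
        rw [← integral_Ioc_eq_integral_Ioo, ← intervalIntegral.integral_of_le hx.le, integral_pow]
        simp
    _ = ENNReal.ofReal x ^ (p + 1) / (p + 1) := by
        rw [ENNReal.ofReal_div_of_pos (by positivity), ENNReal.ofReal_pow hx.le]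
        norm_cast

lemma factorial_div_factorial_div_succ (p k : ℕ) :
    (p ! : ℝ≥0∞) / (p + k)! / (p + k + 1 : ℕ) = p ! / (p + k + 1)! := by
  rw [factorial_succ, Nat.cast_mul, mul_comm, ENNReal.div_eq_inv_mul, ENNReal.div_eq_inv_mul,
    ENNReal.div_eq_inv_mul, ENNReal.mul_inv (by simp) (by simp)]
  ring

lemma iterIntegral_tsum_mul_ofReal_pow {ι : Type*} [Countable ι] (c : ι → ℝ≥0∞) (p : ι → ℕ)
    (k : ℕ) (x : ℝ) :
    iterIntegral k (fun x => ∑' i, c i * ENNReal.ofReal x ^ p i) x =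
      ∑' i, c i * ((p i)! / (p i + k)!) * ENNReal.ofReal x ^ (p i + k) := by
  induction k generalizing x with
  | zero =>
    simp [iterIntegral, ENNReal.div_self (Nat.cast_ne_zero.2 (factorial_ne_zero _))]
  | succ k ih =>
    simp only [iterIntegral] at ih ⊢
    simp_rw [ih]
    rw [lintegral_tsum fun i => by fun_prop]
    refine tsum_congr fun i => ?_
    rw [lintegral_const_mul _ (by fun_prop), lintegral_Ioo_ofReal_pow, ← add_assoc,
      ← factorial_div_factorial_div_succ, Nat.cast_succ]
    simp only [div_eq_mul_inv]
    ring

/-- Sequence form of Theorem 2.10: for `a : ℕ → [0,∞]`, `f(λ) = ∑ n! λ^(2n) a n` and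
`m ≥ 1`, the `m`-fold iterated integral `(J^m f)(1)` equals `∑ n! ((2n)!/(2n+m)!) a n`,
and this is finite iff `∑ (n!/(1+n^m)) a n < ∞`. -/
theorem dual_Dm_characterization (a : ℕ → ℝ≥0∞) (m : ℕ) (hm : 1 ≤ m) :
    (iterIntegral m
        (fun x : ℝ => ∑' n : ℕ, (n.factorial : ℝ≥0∞) * ENNReal.ofReal x ^ (2 * n) * a n) 1) =
      (∑' n : ℕ, (n.factorial : ℝ≥0∞) *
        (((2 * n).factorial : ℝ≥0∞) / ((2 * n + m).factorial : ℝ≥0∞)) * a n) ∧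
    ((iterIntegral m
        (fun x : ℝ => ∑' n : ℕ, (n.factorial : ℝ≥0∞) * ENNReal.ofReal x ^ (2 * n) * a n) 1) < ⊤ ↔
      (∑' n : ℕ, (n.factorial : ℝ≥0∞) / (1 + (n : ℝ≥0∞) ^ m) * a n) < ⊤) := by
  have hJ : iterIntegral m
      (fun x : ℝ => ∑' n : ℕ, (n ! : ℝ≥0∞) * ENNReal.ofReal x ^ (2 * n) * a n) 1 =
      ∑' n : ℕ, (n ! : ℝ≥0∞) * ((2 * n)! / (2 * n + m)!) * a n := by
    simp_rw [mul_right_comm _ (ENNReal.ofReal _ ^ _)]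
    rw [iterIntegral_tsum_mul_ofReal_pow]
    simp only [ENNReal.ofReal_one, one_pow, mul_one, mul_right_comm _ (a _)]
  refine ⟨hJ, ?_⟩
  rw [hJ]
  refine ENNReal.tsum_lt_top_iff_of_le_of_le_mul (natCast_ne_top ((2 * (m + 2)) ^ m))
    (fun n => ?_) (fun n => ?_)
  · exact mul_le_mul_left
      (mul_le_mul_right (factorial_div_factorial_le_inv n (Nat.pos_iff_ne_zero.mp hm)) _) _
  · calc (n ! : ℝ≥0∞) / (1 + (n : ℝ≥0∞) ^ m) * a n
        ≤ n ! * (((2 * (m + 2)) ^ m : ℕ) * ((2 * n)! / (2 * n + m)!)) * a n :=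
          mul_le_mul_left (mul_le_mul_right (inv_le_mul_factorial_div_factorial n m) _) _
      _ = ((2 * (m + 2)) ^ m : ℕ) * (n ! * ((2 * n)! / (2 * n + m)!) * a n) := by ring
end

section
/- Let σ ∈ (−1,1) and λ ∈ (0,1). Then the complex-valued integral over ℝ⁴, ∫_{ℝ⁴} exp(−(λ²/2)·((x+iy)² + (v−iw)²))·exp(−(x² + y² + v² + w² − 2σ·(xv + yw))/(1−σ²)) dx dy dv dw, equals π²·(1−σ²)/√(1−σ²·λ⁴) (a real number, viewed as a complex number). (This is the Gaussian computation at the heart of Lemma A.5, giving ∫ Sδ(⟨f,·⟩)(λu)·conj(Sδ(⟨g,·⟩)(λu)) dν(u) = (1/(2π‖f‖‖g‖))·(1−σ²λ⁴)^(−1/2) with σ = ⟨f/‖f‖, g/‖g‖⟩.) -/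
/-!
Group the coordinates as `((x, v), (y, w))`. For fixed `(x, v)` the integrand is a Gaussian in
`(y, w)` with a real positive definite quadratic part and a purely imaginary linear part;
integrating it out leaves a real Gaussian in `(x, v)`, and the two determinants multiply to
`(1 - σ²λ⁴) / (1 - σ²)²`. Each two-dimensional Gaussian integral is two one-dimensional ones,
by Fubini and completing the square.
-/

open Real MeasureTheory Complex

theorem integral_cexp_neg_mul_sq_add {a : ℝ} (ha : 0 < a) (p r : ℂ) :
    ∫ x : ℝ, cexp (-a * x ^ 2 + p * x + r) = √(π / a) * cexp (p ^ 2 / (4 * a) + r) := by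
  rw [integral_cexp_quadratic (by simpa using ha), neg_neg, ← ofReal_div,
    show (1 / 2 : ℂ) = ((1 / 2 : ℝ) : ℂ) by norm_num, ← ofReal_cpow (by positivity),
    ← sqrt_eq_rpow]
  congr 2
  ring

theorem integrable_exp_neg_mul_sq_add_sq {k : ℝ} (hk : 0 < k) :
    Integrable (fun z : ℝ × ℝ ↦ rexp (-k * (z.1 ^ 2 + z.2 ^ 2))) := by
  simp_rw [mul_add, Real.exp_add]
  exact (integrable_exp_neg_mul_sq hk).mul_prod (integrable_exp_neg_mul_sq hk)

section QuadraticForm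

variable {a b c : ℝ}

theorem det_div_trace_mul_le_quadratic (ha : 0 < a) (hd : 0 < a * c - b ^ 2) (x y : ℝ) :
    (a * c - b ^ 2) / (a + c) * (x ^ 2 + y ^ 2) ≤ a * x ^ 2 + 2 * b * x * y + c * y ^ 2 := by
  have hc : 0 < c := by nlinarith [sq_nonneg b]
  rw [div_mul_eq_mul_div, div_le_iff₀ (by positivity)]
  nlinarith [sq_nonneg (a * x + b * y), sq_nonneg (b * x + c * y)]

theorem integrable_cexp_neg_quadratic_prod (ha : 0 < a) (hd : 0 < a * c - b ^ 2) (p q r : ℂ) :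
    Integrable (fun z : ℝ × ℝ ↦
      cexp (-(a * z.1 ^ 2 + 2 * b * z.1 * z.2 + c * z.2 ^ 2) + p * z.1 + q * z.2 + r)) := by
  have hc : 0 < c := by nlinarith [sq_nonneg b]
  have hQ := det_div_trace_mul_le_quadratic ha hd
  set m := (a * c - b ^ 2) / (a + c)
  have hm : 0 < m := by positivity
  refine ((integrable_exp_neg_mul_sq_add_sq (half_pos hm)).const_mul
      (rexp (r.re + (p.re ^ 2 + q.re ^ 2) / (2 * m)))).mono' (by fun_prop)
      (ae_of_all _ fun z ↦ ?_)
  obtain ⟨x, y⟩ := z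
  have young (s t : ℝ) : s * t ≤ m / 2 * t ^ 2 + s ^ 2 / (2 * m) := by
    rw [← sub_nonneg]
    have : 0 ≤ (m * t - s) ^ 2 / (2 * m) := by positivity
    convert this using 1
    field_simp
    ring
  rw [norm_exp, ← Real.exp_add, Real.exp_le_exp]
  simp only [add_re, neg_re, mul_re, mul_im, ofReal_re, ofReal_im, ← ofReal_pow, re_ofNat,
    im_ofNat, mul_zero, zero_mul, sub_zero, add_zero]
  linear_combination hQ x y + young p.re x + young q.re y

theorem integral_cexp_neg_quadratic_prod (ha : 0 < a) (hd : 0 < a * c - b ^ 2) (p q r : ℂ) :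
    ∫ z : ℝ × ℝ, cexp (-(a * z.1 ^ 2 + 2 * b * z.1 * z.2 + c * z.2 ^ 2) + p * z.1 + q * z.2 + r) =
      π / √(a * c - b ^ 2) *
        cexp ((c * p ^ 2 - 2 * b * p * q + a * q ^ 2) / (4 * (a * c - b ^ 2)) + r) := by
  have hc : 0 < c := by nlinarith [sq_nonneg b]
  have ha' : 0 < a - b ^ 2 / c := by rw [sub_pos, div_lt_iff₀ hc]; linarith
  have hc' : (c : ℂ) ≠ 0 := by exact_mod_cast hc.ne'
  have hd' : (c * a - b ^ 2 : ℂ) ≠ 0 := by norm_cast; rw [mul_comm]; exact hd.ne'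
  have inner (x : ℝ) :
      ∫ y : ℝ, cexp (-(a * x ^ 2 + 2 * b * x * y + c * y ^ 2) + p * x + q * y + r) =
        √(π / c) *
          cexp (-(a - b ^ 2 / c : ℝ) * x ^ 2 + (p - b * q / c) * x + (q ^ 2 / (4 * c) + r)) := by
    convert integral_cexp_neg_mul_sq_add hc (q - 2 * b * x) (-a * x ^ 2 + p * x + r) using 3
    · congr 1
      ring
    · push_cast
      field_simp
      ring
  rw [Measure.volume_eq_prod, integral_prod _ (integrable_cexp_neg_quadratic_prod ha hd p q r)]
  simp_rw [inner]
  rw [integral_const_mul, integral_cexp_neg_mul_sq_add ha', ← mul_assoc, ← ofReal_mul,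
    ← sqrt_mul (by positivity)]
  congr 2
  · rw [show π / c * (π / (a - b ^ 2 / c)) = π ^ 2 / (a * c - b ^ 2) by field_simp,
      sqrt_div' _ hd.le, sqrt_sq pi_pos.le]
    push_cast
    rfl
  · push_cast
    field_simp
    ring

end QuadraticForm

def MeasurableEquiv.prodProdProdComm (α β γ δ : Type*) [MeasurableSpace α]
    [MeasurableSpace β] [MeasurableSpace γ] [MeasurableSpace δ] :
    (α × β) × γ × δ ≃ᵐ (α × γ) × β × δ where
  toEquiv := Equiv.prodProdProdComm α β γ δ
  measurable_toFun := by
    change Measurable fun t : (α × β) × γ × δ ↦ ((t.1.1, t.2.1), (t.1.2, t.2.2))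
    fun_prop
  measurable_invFun := by
    change Measurable fun t : (α × γ) × β × δ ↦ ((t.1.1, t.2.1), (t.1.2, t.2.2))
    fun_prop

theorem MeasureTheory.measurePreserving_prodProdProdComm {α β γ δ : Type*} [MeasurableSpace α]
    [MeasurableSpace β] [MeasurableSpace γ] [MeasurableSpace δ] (μa : Measure α) (μb : Measure β)
    (μc : Measure γ) (μd : Measure δ) [SFinite μa] [SFinite μb] [SFinite μc] [SFinite μd] :
    MeasurePreserving (MeasurableEquiv.prodProdProdComm α β γ δ)
      ((μa.prod μb).prod (μc.prod μd)) ((μa.prod μc).prod (μb.prod μd)) := by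
  have hswap : MeasurePreserving (Prod.map Prod.swap id : (β × γ) × δ → (γ × β) × δ)
      ((μb.prod μc).prod μd) ((μc.prod μb).prod μd) :=
    Measure.measurePreserving_swap.prod (MeasurePreserving.id μd)
  have hmid : MeasurePreserving (fun t : β × γ × δ ↦ (t.2.1, t.1, t.2.2))
      (μb.prod (μc.prod μd)) (μc.prod (μb.prod μd)) :=
    (measurePreserving_prodAssoc μc μb μd).comp
      (hswap.comp (measurePreserving_prodAssoc μb μc μd).symm)
  exact (measurePreserving_prodAssoc μa μc (μb.prod μd)).symm.comp
    (((MeasurePreserving.id μa).prod hmid).comp (measurePreserving_prodAssoc μa μb (μc.prod μd)))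


theorem integral_cexp_coupled_quadratic {A B b k : ℝ} (hAb : 0 < A + b) (hAb' : 0 < A - b)
    (hBb : 0 < B + b) (hBb' : 0 < B - b) :
    ∫ z : (ℝ × ℝ) × (ℝ × ℝ),
        cexp (-(A * z.2.1 ^ 2 + 2 * b * z.2.1 * z.2.2 + A * z.2.2 ^ 2)
          + (-I * k * z.1.1) * z.2.1 + (I * k * z.1.2) * z.2.2
          + -(B * z.1.1 ^ 2 + 2 * b * z.1.1 * z.1.2 + B * z.1.2 ^ 2)) =
      π ^ 2 / √(((A - b) * (B + b) + k ^ 2 / 4) * ((A + b) * (B - b) + k ^ 2 / 4)) := by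
  have hA : 0 < A := by linarith
  have hB : 0 < B := by linarith
  have hδA : 0 < A * A - b ^ 2 := by nlinarith
  have hδB : 0 < B * B - b ^ 2 := by nlinarith
  -- the quadratic form in `z₁` left after integrating out `z₂`
  set a' := B + k ^ 2 * A / (4 * (A * A - b ^ 2))
  set b' := b * (1 + k ^ 2 / (4 * (A * A - b ^ 2)))
  have ha' : 0 < a' :=
    add_pos_of_pos_of_nonneg hB (div_nonneg (by positivity) (mul_pos four_pos hδA).le)
  set D := ((A - b) * (B + b) + k ^ 2 / 4) * ((A + b) * (B - b) + k ^ 2 / 4)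
  have hD : 0 < D := mul_pos (by positivity) (by positivity)
  have hδ'eq : a' * a' - b' ^ 2 = D / (A * A - b ^ 2) := by
    have : A ^ 2 - b ^ 2 ≠ 0 := by rw [sq]; exact hδA.ne'
    simp only [a', b', D]
    field_simp
    ring
  have hδ' : 0 < a' * a' - b' ^ 2 := hδ'eq ▸ div_pos hD hδA
  have hint : Integrable (fun z : (ℝ × ℝ) × (ℝ × ℝ) ↦
        cexp (-(A * z.2.1 ^ 2 + 2 * b * z.2.1 * z.2.2 + A * z.2.2 ^ 2)
          + (-I * k * z.1.1) * z.2.1 + (I * k * z.1.2) * z.2.2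
          + -(B * z.1.1 ^ 2 + 2 * b * z.1.1 * z.1.2 + B * z.1.2 ^ 2))) := by
    refine ((integrable_cexp_neg_quadratic_prod hB hδB 0 0 0).norm.mul_prod
      (integrable_cexp_neg_quadratic_prod hA hδA 0 0 0).norm).mono' (by fun_prop)
      (ae_of_all _ fun z ↦ le_of_eq ?_)
    rw [← norm_mul, ← Complex.exp_add, norm_exp, norm_exp]
    simp only [neg_add_rev, neg_mul, add_re, neg_re, mul_re, ofReal_re, ofReal_im, zero_mul,
      sub_zero, re_ofNat, im_ofNat, mul_zero, mul_im, add_zero, I_re, I_im, sub_self, one_mul,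
      zero_add, neg_zero, exp_eq_exp]
    ring
  rw [Measure.volume_eq_prod, integral_prod _ hint]
  have inner (z₁ : ℝ × ℝ) : ∫ z₂ : ℝ × ℝ,
      cexp (-(A * z₂.1 ^ 2 + 2 * b * z₂.1 * z₂.2 + A * z₂.2 ^ 2)
          + (-I * k * z₁.1) * z₂.1 + (I * k * z₁.2) * z₂.2
          + -(B * z₁.1 ^ 2 + 2 * b * z₁.1 * z₁.2 + B * z₁.2 ^ 2)) =
      π / √(A * A - b ^ 2) *
        cexp (-(a' * z₁.1 ^ 2 + 2 * b' * z₁.1 * z₁.2 + a' * z₁.2 ^ 2)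
          + 0 * z₁.1 + 0 * z₁.2 + 0) := by
    rw [integral_cexp_neg_quadratic_prod hA hδA]
    congr 2
    simp only [a', b']
    push_cast
    linear_combination (k ^ 2 * (A * z₁.1 ^ 2 + 2 * b * z₁.1 * z₁.2 + A * z₁.2 ^ 2)
      / (4 * (A * A - b ^ 2)) : ℂ) * I_sq
  simp only [inner]
  rw [integral_const_mul, integral_cexp_neg_quadratic_prod ha' hδ', hδ'eq]
  simp only [ne_eq, OfNat.ofNat_ne_zero, not_false_eq_true, zero_pow, mul_zero, sub_zero,
    add_zero, zero_div, Complex.exp_zero, mul_one]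
  rw [sqrt_div' _ hδA.le, div_mul_div_comm, ← sq, ← ofReal_mul,
    mul_div_cancel₀ _ (sqrt_pos.2 hδA).ne']

theorem gaussian_integrand_eq_cexp_coupled_quadratic {σ l : ℝ} (x y v w : ℝ) :
    cexp (-((l : ℂ) ^ 2 / 2) * (((x : ℂ) + y * I) ^ 2 + ((v : ℂ) - w * I) ^ 2)) *
        (rexp (-(x ^ 2 + y ^ 2 + v ^ 2 + w ^ 2 - 2 * σ * (x * v + y * w)) / (1 - σ ^ 2)) : ℂ) =
      cexp (-(((1 / (1 - σ ^ 2) - l ^ 2 / 2 : ℝ) : ℂ) * y ^ 2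
            + 2 * ((-σ / (1 - σ ^ 2) : ℝ) : ℂ) * y * w
            + ((1 / (1 - σ ^ 2) - l ^ 2 / 2 : ℝ) : ℂ) * w ^ 2)
        + (-I * (l ^ 2 : ℝ) * x) * y + (I * (l ^ 2 : ℝ) * v) * w
        + -(((1 / (1 - σ ^ 2) + l ^ 2 / 2 : ℝ) : ℂ) * x ^ 2
            + 2 * ((-σ / (1 - σ ^ 2) : ℝ) : ℂ) * x * v
            + ((1 / (1 - σ ^ 2) + l ^ 2 / 2 : ℝ) : ℂ) * v ^ 2)) := by
  rw [ofReal_exp, ← Complex.exp_add]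
  congr 1
  push_cast
  linear_combination (-(l : ℂ) ^ 2 / 2 * (y ^ 2 + w ^ 2)) * I_sq

theorem one_sub_div_one_sub_sq_sub_pos {s l : ℝ} (hs : s ^ 2 < 1) (hl : l ^ 2 < 1) :
    0 < (1 - s) / (1 - s ^ 2) - l ^ 2 / 2 := by
  have hs₁ : 0 < 1 - s := by nlinarith
  have h2 : 0 < 2 - (1 + s) * l ^ 2 := by nlinarith
  rw [div_sub_div _ _ (by linarith) two_ne_zero]
  exact div_pos (by nlinarith [mul_pos hs₁ h2]) (by linarith)

/-- The four-dimensional Gaussian computation at the heart of Lemma A.5: for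
`σ ∈ (−1,1)` and `λ ∈ (0,1)`,
`∫_{ℝ⁴} exp(−(λ²/2)((x+iy)² + (v−iw)²)) exp(−(x²+y²+v²+w² − 2σ(xv+yw))/(1−σ²)) dx dy dv dw
  = π² (1−σ²) / √(1−σ²λ⁴)`. -/
theorem gaussian_integral_four_dim (σ l : ℝ) (hσ : σ ∈ Set.Ioo (-1 : ℝ) 1)
    (hl : l ∈ Set.Ioo (0 : ℝ) 1) :
    (∫ p : ℝ × ℝ × ℝ × ℝ,
        Complex.exp (-((l : ℂ) ^ 2 / 2) *
            (((p.1 : ℂ) + (p.2.1 : ℂ) * Complex.I) ^ 2 +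
              ((p.2.2.1 : ℂ) - (p.2.2.2 : ℂ) * Complex.I) ^ 2)) *
          (Real.exp (-(p.1 ^ 2 + p.2.1 ^ 2 + p.2.2.1 ^ 2 + p.2.2.2 ^ 2 -
              2 * σ * (p.1 * p.2.2.1 + p.2.1 * p.2.2.2)) / (1 - σ ^ 2)) : ℂ)) =
      ((Real.pi ^ 2 * (1 - σ ^ 2) / Real.sqrt (1 - σ ^ 2 * l ^ 4) : ℝ) : ℂ) := by
  have hσ2 : σ ^ 2 < 1 := by nlinarith [hσ.1, hσ.2]
  have hl2 : l ^ 2 < 1 := by nlinarith [hl.1, hl.2]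
  have hu : 0 < 1 - σ ^ 2 := sub_pos.2 hσ2
  set A := 1 / (1 - σ ^ 2) - l ^ 2 / 2
  set B := 1 / (1 - σ ^ 2) + l ^ 2 / 2
  set b := -σ / (1 - σ ^ 2)
  have hD : ((A - b) * (B + b) + (l ^ 2) ^ 2 / 4) * ((A + b) * (B - b) + (l ^ 2) ^ 2 / 4) =
      (1 - σ ^ 2 * l ^ 4) / (1 - σ ^ 2) ^ 2 := by
    simp only [A, B, b]
    field_simp
    ring
  have key := integral_cexp_coupled_quadratic (k := l ^ 2)
    (by linear_combination one_sub_div_one_sub_sq_sub_pos hσ2 hl2 : 0 < A + b)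
    (by linear_combination one_sub_div_one_sub_sq_sub_pos (s := -σ) (by rwa [neg_sq]) hl2 :
      0 < A - b)
    (by linear_combination div_pos (sub_pos.2 hσ.2) hu + sq_nonneg l / 2 : 0 < B + b)
    (by linear_combination div_pos (neg_lt_iff_pos_add.1 hσ.1) hu + sq_nonneg l / 2 : 0 < B - b)
  have hmp : MeasurePreserving
      (MeasurableEquiv.prodAssoc.symm.trans (MeasurableEquiv.prodProdProdComm ℝ ℝ ℝ ℝ)) :=
    (measurePreserving_prodProdProdComm volume volume volume volume).comp
      volume_preserving_prodAssoc.symm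
  rw [← hmp.integral_comp', hD, sqrt_div' _ (sq_nonneg _), sqrt_sq hu.le] at key
  convert key using 1
  · congr 1
    ext p
    exact gaussian_integrand_eq_cexp_coupled_quadratic _ _ _ _
  · push_cast
    field_simp
end
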